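/- Let S be a blocking semioval with exactly 25 points in PG(2,11) such that no line meets S in more than 6 points (in particular S has no 10-secant). Then there exist distinct points Q and R of S such that Q and R each lie on exactly three 6-secants to S, and the line through Q and R is itself a 6-secant to S. -/
import Mathlib

open Module Submodule

instance : Fact (Nat.Prime 11) := ⟨by norm_num⟩

/-- The points of `PG(2,11)`: the projectivization of `(ZMod 11)^3`. -/
abbrev PGPoint : Type := Projectivization (ZMod 11) (Fin 3 → ZMod 11)

/-- The lines of `PG(2,11)`: the 2-dimensional subspaces of `(ZMod 11)^3`. -/
abbrev PGLine : Type :=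
  {W : Submodule (ZMod 11) (Fin 3 → ZMod 11) // Module.finrank (ZMod 11) W = 2}

/-- Incidence: a point lies on a line when its representing 1-dimensional
subspace is contained in the line's 2-dimensional subspace. -/
def PGmem (P : PGPoint) (L : PGLine) : Prop := Projectivization.submodule P ≤ L.val

/-- The set of points lying on a line. -/
def linePts (L : PGLine) : Set PGPoint := {P | PGmem P L}

/-- The set of points of `S` lying on the line `L`. -/
def secantPts (S : Set PGPoint) (L : PGLine) : Set PGPoint := {P ∈ S | PGmem P L}

/-- A line is a `k`-secant to `S` if it meets `S` in exactly `k` points. -/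
def IsSecant (S : Set PGPoint) (k : ℕ) (L : PGLine) : Prop := (secantPts S L).ncard = k

/-- A tangent line to `S` is a 1-secant. -/
def IsTangent (S : Set PGPoint) (L : PGLine) : Prop := IsSecant S 1 L

/-- A blocking set: every line meets `S`, but `S` contains no line. -/
def IsBlockingSet (S : Set PGPoint) : Prop :=
  (∀ L : PGLine, (secantPts S L).Nonempty) ∧ ∀ L : PGLine, ¬ linePts L ⊆ S

/-- A semioval: every point of `S` lies on exactly one tangent line to `S`. -/
def IsSemioval (S : Set PGPoint) : Prop :=
  ∀ P ∈ S, ∃! L : PGLine, PGmem P L ∧ IsTangent S L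

/-- A blocking semioval is both a blocking set and a semioval. -/
def IsBlockingSemioval (S : Set PGPoint) : Prop := IsBlockingSet S ∧ IsSemioval S

/-! ### Geometric counting facts about PG(2,11) -/

theorem myFiniteV (V : Type*) [AddCommGroup V] [Module (ZMod 11) V]
    [FiniteDimensional (ZMod 11) V] : Finite V := Module.finite_of_finite (ZMod 11)

theorem myFiniteSub (V : Type*) [AddCommGroup V] [Module (ZMod 11) V]
    [FiniteDimensional (ZMod 11) V] : Finite (Submodule (ZMod 11) V) := by
  have := myFiniteV V
  exact Finite.of_injective (fun W : Submodule (ZMod 11) V => (W : Set V)) SetLike.coe_injective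

/-- The number of 1-dimensional subspaces of an `n`-dimensional vector space over
`ZMod 11` satisfies `N * 10 + 1 = 11 ^ n`. -/
theorem card_onedim (V : Type*) [AddCommGroup V] [Module (ZMod 11) V]
    [FiniteDimensional (ZMod 11) V] :
    Nat.card {W : Submodule (ZMod 11) V // finrank (ZMod 11) W = 1} * 10 + 1
      = 11 ^ finrank (ZMod 11) V := by
  have hfinV := myFiniteV V
  have hfinS := myFiniteSub V
  classical
  letI : Fintype V := Fintype.ofFinite V
  letI : Fintype {v : V // v ≠ 0} := Fintype.ofFinite _
  letI : Fintype {W : Submodule (ZMod 11) V // finrank (ZMod 11) W = 1} := Fintype.ofFinite _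
  set f : {v : V // v ≠ 0} → {W : Submodule (ZMod 11) V // finrank (ZMod 11) W = 1} :=
    fun v => ⟨(ZMod 11) ∙ v.1, finrank_span_singleton v.2⟩ with hf
  have hfiber : ∀ W : {W : Submodule (ZMod 11) V // finrank (ZMod 11) W = 1},
      Fintype.card {v : {v : V // v ≠ 0} // f v = W} = 10 := by
    intro W
    have hWcard : Fintype.card W.1 = 11 := by
      have := card_eq_pow_finrank (K := ZMod 11) (V := W.1)
      rw [W.2] at this; simpa [ZMod.card] using this
    have e : {v : {v : V // v ≠ 0} // f v = W} ≃ {w : W.1 // w ≠ 0} := {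
      toFun := fun v => ⟨⟨v.1.1, by
        have : ((ZMod 11) ∙ v.1.1) = W.1 := congrArg Subtype.val v.2
        exact this ▸ mem_span_singleton_self v.1.1⟩, by
          simp only [ne_eq, Submodule.mk_eq_zero]; exact v.1.2⟩
      invFun := fun w => ⟨⟨w.1.1, fun h => w.2 (Subtype.ext h)⟩, by
        apply Subtype.ext
        have hle : ((ZMod 11) ∙ w.1.1) ≤ W.1 := by
          rw [Submodule.span_singleton_le_iff_mem]; exact w.1.2
        refine eq_of_le_of_finrank_eq hle ?_
        rw [W.2, finrank_span_singleton (fun h => w.2 (Subtype.ext h))]⟩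
      left_inv := fun v => by ext; rfl
      right_inv := fun w => by ext; rfl }
    rw [Fintype.card_congr e]
    have : Fintype.card {w : W.1 // ¬ (w = 0)}
        = Fintype.card W.1 - Fintype.card {w : W.1 // w = 0} := Fintype.card_subtype_compl _
    simpa [hWcard] using this
  have hcount : Fintype.card {v : V // v ≠ 0}
      = Fintype.card {W : Submodule (ZMod 11) V // finrank (ZMod 11) W = 1} * 10 := by
    rw [Fintype.card_congr (Equiv.sigmaFiberEquiv f).symm, Fintype.card_sigma]
    simp [hfiber, mul_comm]
  have hV : Fintype.card V = 11 ^ finrank (ZMod 11) V := by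
    have := card_eq_pow_finrank (K := ZMod 11) (V := V); simpa [ZMod.card] using this
  have hnz : Fintype.card {v : V // v ≠ 0} = Fintype.card V - 1 := by
    have : Fintype.card {v : V // ¬ (v = 0)}
        = Fintype.card V - Fintype.card {v : V // v = 0} := Fintype.card_subtype_compl _
    simpa using this
  have hpos : 1 ≤ Fintype.card V := Fintype.card_pos
  rw [Nat.card_eq_fintype_card, ← hcount, hnz, ← hV]
  omega

theorem finrank_V0 : finrank (ZMod 11) (Fin 3 → ZMod 11) = 3 := by
  simp [finrank_fin_fun]

instance : Finite PGPoint := by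
  have := myFiniteV (Fin 3 → ZMod 11)
  exact Quotient.finite _

instance : Finite PGLine := by
  have := myFiniteSub (Fin 3 → ZMod 11)
  exact Subtype.finite

/-- `PG(2,11)` has `133` lines. -/
theorem card_PGLine : Nat.card PGLine = 133 := by
  have h := card_onedim (Module.Dual (ZMod 11) (Fin 3 → ZMod 11))
  rw [Subspace.dual_finrank_eq, finrank_V0] at h
  have e : PGLine ≃ {U : Submodule (ZMod 11) (Module.Dual (ZMod 11) (Fin 3 → ZMod 11)) //
      finrank (ZMod 11) U = 1} := {
    toFun := fun L => ⟨L.1.dualAnnihilator, by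
      have e2 : ((Fin 3 → ZMod 11) ⧸ L.1) ≃ₗ[ZMod 11] L.1.dualAnnihilator :=
        Subspace.quotEquivAnnihilator (K := ZMod 11) (V := Fin 3 → ZMod 11) L.1
      have h1 := LinearEquiv.finrank_eq e2
      have h2 := Submodule.finrank_quotient_add_finrank (R := ZMod 11) (M := Fin 3 → ZMod 11) L.1
      rw [finrank_V0, L.2] at h2
      omega⟩
    invFun := fun U => ⟨U.1.dualCoannihilator, by
      have h3 := Subspace.finrank_add_finrank_dualCoannihilator_eq (V := Fin 3 → ZMod 11) U.1
      rw [finrank_V0, U.2] at h3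
      omega⟩
    left_inv := fun L => Subtype.ext (Subspace.dualAnnihilator_dualCoannihilator_eq)
    right_inv := fun U => Subtype.ext (Subspace.dualCoannihilator_dualAnnihilator_eq)}
  rw [Nat.card_congr e]
  omega

set_option synthInstance.maxHeartbeats 1000000 in
/-- Each point of `PG(2,11)` lies on exactly `12` lines. -/
theorem card_lines_through (P : PGPoint) : Nat.card {L : PGLine // PGmem P L} = 12 := by
  set p := P.submodule with hp
  have hpr : finrank (ZMod 11) p = 1 := P.finrank_submodule
  have hq : finrank (ZMod 11) ((Fin 3 → ZMod 11) ⧸ p) = 2 := by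
    have h2 := Submodule.finrank_quotient_add_finrank (R := ZMod 11) (M := Fin 3 → ZMod 11) p
    rw [finrank_V0, hpr] at h2
    omega
  have h := card_onedim ((Fin 3 → ZMod 11) ⧸ p)
  rw [hq] at h
  have key : ∀ U : Submodule (ZMod 11) ((Fin 3 → ZMod 11) ⧸ p),
      finrank (ZMod 11) (comap p.mkQ U) = finrank (ZMod 11) U + 1 := by
    intro U
    set W := comap p.mkQ U with hW
    have hpW : p ≤ W := by
      intro x hx
      simp only [hW, mem_comap, mkQ_apply]
      rw [Quotient.mk_eq_zero p |>.mpr hx]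
      exact U.zero_mem
    have hker : LinearMap.ker (p.mkQ.comp W.subtype) = comap W.subtype p := by
      rw [LinearMap.ker_comp, Submodule.ker_mkQ]
    have hrange : LinearMap.range (p.mkQ.comp W.subtype) = U := by
      rw [LinearMap.range_comp, Submodule.range_subtype]
      exact Submodule.map_comap_eq_of_surjective (Submodule.mkQ_surjective p) U
    have hrn := LinearMap.finrank_range_add_finrank_ker (p.mkQ.comp W.subtype)
    rw [hker, hrange] at hrn
    have hkerrank : finrank (ZMod 11) (comap W.subtype p) = 1 := by
      rw [LinearEquiv.finrank_eq (Submodule.comapSubtypeEquivOfLe hpW), hpr]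
    rw [hkerrank] at hrn
    exact hrn.symm
  have e : {L : PGLine // PGmem P L} ≃
      {U : Submodule (ZMod 11) ((Fin 3 → ZMod 11) ⧸ p) // finrank (ZMod 11) U = 1} := {
    toFun := fun L => ⟨map p.mkQ L.1.1, by
      have hcm : comap p.mkQ (map p.mkQ L.1.1) = L.1.1 := by
        rw [Submodule.comap_map_eq, Submodule.ker_mkQ, sup_eq_left.mpr L.2]
      have := key (map p.mkQ L.1.1)
      rw [hcm, L.1.2] at this
      omega⟩
    invFun := fun U => ⟨⟨comap p.mkQ U.1, by rw [key, U.2]⟩, by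
      show p ≤ comap p.mkQ U.1
      intro x hx
      simp only [mem_comap, mkQ_apply]
      rw [Quotient.mk_eq_zero p |>.mpr hx]
      exact U.1.zero_mem⟩
    left_inv := fun L => by
      apply Subtype.ext; apply Subtype.ext
      show comap p.mkQ (map p.mkQ L.1.1) = L.1.1
      rw [Submodule.comap_map_eq, Submodule.ker_mkQ, sup_eq_left.mpr L.2]
    right_inv := fun U => by
      apply Subtype.ext
      exact Submodule.map_comap_eq_of_surjective (Submodule.mkQ_surjective p) U.1 }
  rw [Nat.card_congr e]
  omega

/-- Any two distinct points of `PG(2,11)` lie on a unique common line. -/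
theorem unique_line (P Q : PGPoint) (hPQ : P ≠ Q) : ∃! L : PGLine, PGmem P L ∧ PGmem Q L := by
  set p := P.submodule with hp
  set q := Q.submodule with hq
  have hpr : finrank (ZMod 11) p = 1 := P.finrank_submodule
  have hqr : finrank (ZMod 11) q = 1 := Q.finrank_submodule
  have hne : p ≠ q := fun h => hPQ (Projectivization.submodule_injective h)
  have hinf : finrank (ZMod 11) (p ⊓ q : Submodule (ZMod 11) (Fin 3 → ZMod 11)) = 0 := by
    have hlt : (p ⊓ q : Submodule (ZMod 11) (Fin 3 → ZMod 11)) < p := by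
      rcases lt_or_eq_of_le (inf_le_left (a := p) (b := q)) with h | h
      · exact h
      · exact absurd (eq_of_le_of_finrank_eq (h ▸ inf_le_right) (by rw [hpr, hqr])) hne
    have := Submodule.finrank_lt_finrank_of_lt hlt
    omega
  have hsup : finrank (ZMod 11) (p ⊔ q : Submodule (ZMod 11) (Fin 3 → ZMod 11)) = 2 := by
    have := Submodule.finrank_sup_add_finrank_inf_eq p q
    rw [hpr, hqr, hinf] at this
    omega
  have hm : PGmem P (⟨p ⊔ q, hsup⟩ : PGLine) ∧ PGmem Q (⟨p ⊔ q, hsup⟩ : PGLine) :=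
    ⟨le_sup_left, le_sup_right⟩
  refine ⟨⟨p ⊔ q, hsup⟩, hm, fun L hL => ?_⟩
  apply Subtype.ext
  exact (eq_of_le_of_finrank_eq (sup_le hL.1 hL.2) (by rw [hsup, L.2])).symm

/-! ### The main theorem -/

theorem exists_QR_on_common_6_secant (S : Set PGPoint) (hS : IsBlockingSemioval S) (hcard : S.ncard = 25)
    (hmax : ∀ L : PGLine, (secantPts S L).ncard ≤ 6) :
    ∃ Q ∈ S, ∃ R ∈ S, Q ≠ R ∧
      ({L : PGLine | PGmem Q L ∧ IsSecant S 6 L}).ncard = 3 ∧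
      ({L : PGLine | PGmem R L ∧ IsSecant S 6 L}).ncard = 3 ∧
      ∃ n : PGLine, PGmem Q n ∧ PGmem R n ∧ IsSecant S 6 n := by
  classical
  letI : Fintype PGPoint := Fintype.ofFinite _
  letI : Fintype PGLine := Fintype.ofFinite _
  -- Finset versions of the data
  set sF : Finset PGPoint := S.toFinset with hsF
  have hmemS : ∀ P, P ∈ sF ↔ P ∈ S := fun P => Set.mem_toFinset
  have hsFcard : sF.card = 25 := by rw [← Set.ncard_eq_toFinset_card']; exact hcard
  set kf : PGLine → ℕ := fun L => (sF.filter (fun P => PGmem P L)).card with hkf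
  have hsec : ∀ L : PGLine, (secantPts S L).ncard = kf L := by
    intro L
    have : secantPts S L = ↑(sF.filter (fun P => PGmem P L)) := by
      ext P; simp [secantPts, hmemS, Set.mem_toFinset]
    rw [this, Set.ncard_coe_finset]
  have hIsSec : ∀ (j : ℕ) (L : PGLine), IsSecant S j L ↔ kf L = j := by
    intro j L; rw [IsSecant, hsec]
  -- basic counts
  have hk1 : ∀ L, 1 ≤ kf L := by
    intro L
    have := hS.1.1 L
    rw [← Set.ncard_pos (Set.toFinite _), hsec] at this
    omega
  have hk6 : ∀ L, kf L ≤ 6 := fun L => by rw [← hsec]; exact hmax L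
  have hdeg : ∀ P : PGPoint, (Finset.univ.filter (fun L => PGmem P L)).card = 12 := by
    intro P
    have h := card_lines_through P
    rw [Nat.card_eq_fintype_card, Fintype.card_subtype] at h
    exact h
  have hpair : ∀ P Q : PGPoint, P ≠ Q →
      (Finset.univ.filter (fun L => PGmem P L ∧ PGmem Q L)).card = 1 := by
    intro P Q hPQ
    obtain ⟨L₀, hL₀, huniq⟩ := unique_line P Q hPQ
    rw [Finset.card_eq_one]
    exact ⟨L₀, by
      ext L
      simp only [Finset.mem_filter, Finset.mem_univ, true_and, Finset.mem_singleton]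
      exact ⟨fun h => huniq L h, fun h => h ▸ hL₀⟩⟩
  -- c P Q : number of lines through both P and Q
  have hc : ∀ P ∈ sF, ∀ Q : PGPoint,
      (Finset.univ.filter (fun L => PGmem P L ∧ PGmem Q L)).card
        = if Q = P then 12 else 1 := by
    intro P _ Q
    by_cases h : Q = P
    · subst h; simp only [if_pos rfl, and_self]; exact hdeg Q
    · rw [if_neg h]; exact hpair P Q (fun hh => h hh.symm)
  -- c-sum: for P ∈ S, summing over Q ∈ S the number of lines through P and Q gives 36
  have hc36 : ∀ P ∈ sF,
      ∑ Q ∈ sF, (Finset.univ.filter (fun L => PGmem P L ∧ PGmem Q L)).card = 36 := by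
    intro P hP
    rw [Finset.sum_congr rfl (fun Q _ => hc P hP Q)]
    have hconst : ∀ Q ∈ sF, (if Q = P then (12:ℕ) else 1) = (if Q = P then (11:ℕ) else 0) + 1 :=
      by intro Q _; split <;> omega
    rw [Finset.sum_congr rfl hconst, Finset.sum_add_distrib,
      Finset.sum_ite_eq' sF P (fun _ => (11 : ℕ)), if_pos hP, Finset.sum_const, hsFcard]
    simp
  -- sum of kf over lines through a fixed point of S is 36
  have hsum_through : ∀ P ∈ sF,
      ∑ L ∈ Finset.univ.filter (fun L => PGmem P L), kf L = 36 := by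
    intro P hP
    have swap : ∑ L ∈ Finset.univ.filter (fun L => PGmem P L), kf L
        = ∑ Q ∈ sF, (Finset.univ.filter (fun L => PGmem P L ∧ PGmem Q L)).card := by
      simp only [hkf, Finset.card_filter, Finset.sum_filter]
      rw [Finset.sum_comm]
      apply Finset.sum_congr rfl
      intro Q _
      by_cases h1 : PGmem P Q <;> simp [h1]
    rw [swap, hc36 P hP]
  -- total incidence count: sum of kf over all lines is 300
  have hS1 : ∑ L : PGLine, kf L = 300 := by
    have swap : ∑ L : PGLine, kf L
        = ∑ P ∈ sF, (Finset.univ.filter (fun L => PGmem P L)).card := by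
      simp only [hkf, Finset.card_filter]
      rw [Finset.sum_comm]
    rw [swap, Finset.sum_congr rfl (fun P _ => hdeg P), Finset.sum_const, hsFcard]
    simp
  -- sum of kf^2 over all lines is 900
  have hS2 : ∑ L : PGLine, kf L * kf L = 900 := by
    have expand : ∀ L : PGLine, kf L * kf L
        = ∑ P ∈ sF, ∑ Q ∈ sF,
            (if PGmem P L ∧ PGmem Q L then (1:ℕ) else 0) := by
      intro L
      rw [show kf L = ∑ P ∈ sF, if PGmem P L then (1:ℕ) else 0 from Finset.card_filter _ _,
        Finset.sum_mul_sum]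
      apply Finset.sum_congr rfl; intro P _
      apply Finset.sum_congr rfl; intro Q _
      by_cases h1 : PGmem P L <;> by_cases h2 : PGmem Q L <;> simp [h1, h2]
    rw [Finset.sum_congr rfl (fun L _ => expand L), Finset.sum_comm]
    have inner : ∀ P ∈ sF,
        (∑ Q ∈ sF, ∑ L : PGLine, (if PGmem P L ∧ PGmem Q L then (1:ℕ) else 0)) = 36 := by
      intro P hP
      have : ∀ Q ∈ sF, (∑ L : PGLine, (if PGmem P L ∧ PGmem Q L then (1:ℕ) else 0))
          = (Finset.univ.filter (fun L => PGmem P L ∧ PGmem Q L)).card :=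
        fun Q _ => (Finset.card_filter _ _).symm
      rw [Finset.sum_congr rfl this, hc36 P hP]
    calc ∑ P ∈ sF, ∑ L : PGLine, ∑ Q ∈ sF, (if PGmem P L ∧ PGmem Q L then (1:ℕ) else 0)
        = ∑ P ∈ sF, ∑ Q ∈ sF, ∑ L : PGLine, (if PGmem P L ∧ PGmem Q L then (1:ℕ) else 0) := by
          exact Finset.sum_congr rfl (fun P _ => Finset.sum_comm)
      _ = ∑ P ∈ sF, 36 := Finset.sum_congr rfl inner
      _ = 900 := by rw [Finset.sum_const, hsFcard]; simp
  -- the numbers of j-secants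
  set tt : ℕ → ℕ := fun j => (Finset.univ.filter (fun L => kf L = j)).card with htt
  have hmaps : ∀ L ∈ (Finset.univ : Finset PGLine), kf L ∈ Finset.range 7 := by
    intro L _; rw [Finset.mem_range]; have := hk6 L; omega
  have h133 : ∑ j ∈ Finset.range 7, tt j = 133 := by
    rw [← Finset.card_eq_sum_card_fiberwise hmaps, Finset.card_univ,
      ← Nat.card_eq_fintype_card, card_PGLine]
  have h300 : ∑ j ∈ Finset.range 7, j * tt j = 300 := by
    rw [← hS1, ← Finset.sum_fiberwise_of_maps_to hmaps (fun L => kf L)]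
    apply Finset.sum_congr rfl
    intro j _
    have : ∀ L ∈ Finset.univ.filter (fun L => kf L = j), kf L = j :=
      fun L hL => (Finset.mem_filter.mp hL).2
    rw [Finset.sum_congr rfl this, Finset.sum_const, htt, smul_eq_mul, mul_comm]
  have h900 : ∑ j ∈ Finset.range 7, j * j * tt j = 900 := by
    rw [← hS2, ← Finset.sum_fiberwise_of_maps_to hmaps (fun L => kf L * kf L)]
    apply Finset.sum_congr rfl
    intro j _
    have : ∀ L ∈ Finset.univ.filter (fun L => kf L = j), kf L * kf L = j * j := by
      intro L hL; rw [(Finset.mem_filter.mp hL).2]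
    rw [Finset.sum_congr rfl this, Finset.sum_const, htt, smul_eq_mul, mul_comm]
  -- there are no 0-secants
  have ht0 : tt 0 = 0 := by
    rw [htt, Finset.card_eq_zero]
    apply Finset.filter_eq_empty_iff.mpr
    intro L _
    have := hk1 L; omega
  -- there are exactly 25 tangent lines
  have ht1 : tt 1 = 25 := by
    rw [htt, ← hsFcard]
    have hsingle : ∀ L : PGLine, kf L = 1 →
        ∃ a, sF.filter (fun P => PGmem P L) = {a} := by
      intro L h; exact Finset.card_eq_one.mp h
    have hmem_choose : ∀ (L : PGLine) (h : kf L = 1),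
        (hsingle L h).choose ∈ sF.filter (fun P => PGmem P L) := by
      intro L h
      have hspec := (hsingle L h).choose_spec
      have h2 : (hsingle L h).choose ∈ ({(hsingle L h).choose} : Finset PGPoint) :=
        Finset.mem_singleton_self _
      rwa [← hspec] at h2
    apply Finset.card_bij
      (fun L hL => (hsingle L (Finset.mem_filter.mp hL).2).choose)
    · intro L hL
      exact (Finset.mem_filter.mp (hmem_choose L (Finset.mem_filter.mp hL).2)).1
    · intro L1 hL1 L2 hL2 heq
      have heq' : (hsingle L1 (Finset.mem_filter.mp hL1).2).choose
          = (hsingle L2 (Finset.mem_filter.mp hL2).2).choose := heq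
      have hmem1 : (hsingle L1 (Finset.mem_filter.mp hL1).2).choose
          ∈ sF.filter (fun Q => PGmem Q L1) :=
        hmem_choose L1 (Finset.mem_filter.mp hL1).2
      have hmem2 : (hsingle L1 (Finset.mem_filter.mp hL1).2).choose
          ∈ sF.filter (fun Q => PGmem Q L2) := by
        rw [heq']
        exact hmem_choose L2 (Finset.mem_filter.mp hL2).2
      obtain ⟨hPS, hPL1⟩ := Finset.mem_filter.mp hmem1
      obtain ⟨_, hPL2⟩ := Finset.mem_filter.mp hmem2
      obtain ⟨L₀, _, huniq⟩ := hS.2 _ ((hmemS _).mp hPS)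
      have e1 : L1 = L₀ := huniq L1 ⟨hPL1, (hIsSec 1 L1).mpr (Finset.mem_filter.mp hL1).2⟩
      have e2 : L2 = L₀ := huniq L2 ⟨hPL2, (hIsSec 1 L2).mpr (Finset.mem_filter.mp hL2).2⟩
      rw [e1, e2]
    · intro P hP
      obtain ⟨L, ⟨hPL, htan⟩, _⟩ := hS.2 P ((hmemS _).mp hP)
      have hkL : kf L = 1 := (hIsSec 1 L).mp htan
      have hLmem : L ∈ Finset.univ.filter (fun L => kf L = 1) := by
        simp only [Finset.mem_filter, Finset.mem_univ, true_and]; exact hkL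
      refine ⟨L, hLmem, ?_⟩
      have hspec := (hsingle L (Finset.mem_filter.mp hLmem).2).choose_spec
      have hPmem : P ∈ sF.filter (fun Q => PGmem Q L) := Finset.mem_filter.mpr ⟨hP, hPL⟩
      rw [hspec, Finset.mem_singleton] at hPmem
      exact hPmem.symm
  -- hence at least nine 6-secants
  have ht6 : 9 ≤ tt 6 := by
    have e133 := h133; have e300 := h300; have e900 := h900
    simp only [Finset.sum_range_succ, Finset.sum_range_zero] at e133 e300 e900
    omega
  -- each point of S lies on at most three 6-secants
  set sfun : PGPoint → ℕ :=
    fun P => (Finset.univ.filter (fun L => PGmem P L ∧ kf L = 6)).card with hsfun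
  have hs3 : ∀ P ∈ sF, sfun P ≤ 3 := by
    intro P hP
    set T : Finset PGLine := Finset.univ.filter (fun L => PGmem P L) with hT
    have hTcard : T.card = 12 := hdeg P
    have hTsum : ∑ L ∈ T, kf L = 36 := hsum_through P hP
    set A : Finset PGLine := T.filter (fun L => kf L = 6) with hA
    set rest : Finset PGLine := T.filter (fun L => ¬ kf L = 6) with hrest
    set B : Finset PGLine := rest.filter (fun L => kf L = 1) with hB
    set C : Finset PGLine := rest.filter (fun L => ¬ kf L = 1) with hC
    have hAcard : A.card = sfun P := by
      rw [hsfun, hA, hT, Finset.filter_filter]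
    have hcard1 : A.card + rest.card = 12 := by
      rw [hA, hrest, Finset.card_filter_add_card_filter_not, hTcard]
    have hcard2 : B.card + C.card = rest.card := by
      rw [hB, hC, Finset.card_filter_add_card_filter_not]
    have htang1 : (T.filter (fun L => kf L = 1)).card ≤ 1 := by
      apply Finset.card_le_one.mpr
      intro L1 hL1 L2 hL2
      obtain ⟨L₀, _, huniq⟩ := hS.2 P ((hmemS _).mp hP)
      have m1 := Finset.mem_filter.mp hL1
      have m2 := Finset.mem_filter.mp hL2
      have q1 : PGmem P L1 := (Finset.mem_filter.mp m1.1).2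
      have q2 : PGmem P L2 := (Finset.mem_filter.mp m2.1).2
      rw [huniq L1 ⟨q1, (hIsSec 1 L1).mpr m1.2⟩, huniq L2 ⟨q2, (hIsSec 1 L2).mpr m2.2⟩]
    have hBle : B.card ≤ 1 := by
      refine le_trans (Finset.card_le_card ?_) htang1
      intro L hL
      have m := Finset.mem_filter.mp hL
      exact Finset.mem_filter.mpr ⟨(Finset.mem_filter.mp m.1).1, m.2⟩
    have hsplit1 : ∑ L ∈ T, kf L = ∑ L ∈ A, kf L + ∑ L ∈ rest, kf L :=
      (Finset.sum_filter_add_sum_filter_not T _ _).symm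
    have hsplit2 : ∑ L ∈ rest, kf L = ∑ L ∈ B, kf L + ∑ L ∈ C, kf L :=
      (Finset.sum_filter_add_sum_filter_not rest _ _).symm
    have hAsum : ∑ L ∈ A, kf L = 6 * A.card := by
      rw [Finset.sum_congr rfl (fun L hL => (Finset.mem_filter.mp hL).2),
        Finset.sum_const, smul_eq_mul, mul_comm]
    have hBsum : ∑ L ∈ B, kf L = B.card := by
      rw [Finset.sum_congr rfl (fun L hL => (Finset.mem_filter.mp hL).2),
        Finset.sum_const, smul_eq_mul, mul_one]
    have hCsum : C.card * 2 ≤ ∑ L ∈ C, kf L := by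
      have := Finset.card_nsmul_le_sum C kf 2 (fun L hL => by
        have m := Finset.mem_filter.mp hL
        have := hk1 L
        omega)
      simpa [smul_eq_mul] using this
    omega
  -- double count: incidences between points of S and 6-secants
  have hsum_s : ∑ P ∈ sF, sfun P = 6 * tt 6 := by
    have swap : ∑ P ∈ sF, sfun P
        = ∑ L : PGLine, ∑ P ∈ sF, (if PGmem P L ∧ kf L = 6 then (1:ℕ) else 0) := by
      simp only [hsfun, Finset.card_filter]
      rw [Finset.sum_comm]
    rw [swap]
    have inner : ∀ L : PGLine,
        (∑ P ∈ sF, (if PGmem P L ∧ kf L = 6 then (1:ℕ) else 0))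
          = if kf L = 6 then 6 else 0 := by
      intro L
      by_cases h6 : kf L = 6
      · simp only [h6, and_true, if_true]
        rw [← Finset.sum_filter]
        have : ∑ P ∈ sF.filter (fun P => PGmem P L), (1:ℕ)
            = (sF.filter (fun P => PGmem P L)).card := by
          rw [Finset.sum_const, smul_eq_mul, mul_one]
        rw [this]
        exact h6
      · simp [h6]
    rw [Finset.sum_congr rfl (fun L _ => inner L), ← Finset.sum_filter,
      Finset.sum_const, smul_eq_mul, mul_comm]
  -- lower bound on the number of points lying on three 6-secants
  set n3 : ℕ := (sF.filter (fun P => sfun P = 3)).card with hn3def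
  have hn3le : n3 ≤ 25 := by rw [hn3def, ← hsFcard]; exact Finset.card_filter_le _ _
  have hupper : 6 * tt 6 ≤ 50 + n3 := by
    have hle : ∑ P ∈ sF, sfun P ≤ ∑ P ∈ sF, (if sfun P = 3 then (3:ℕ) else 2) := by
      apply Finset.sum_le_sum
      intro P hP
      have := hs3 P hP
      split <;> omega
    have hcards : n3 + (sF.filter (fun P => ¬ sfun P = 3)).card = 25 := by
      rw [hn3def, Finset.card_filter_add_card_filter_not, hsFcard]
    have hval : ∑ P ∈ sF, (if sfun P = 3 then (3:ℕ) else 2)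
        = 3 * n3 + 2 * (sF.filter (fun P => ¬ sfun P = 3)).card := by
      rw [← Finset.sum_filter_add_sum_filter_not sF (fun P => sfun P = 3)]
      congr 1
      · rw [Finset.sum_congr rfl (fun P hP => if_pos (Finset.mem_filter.mp hP).2),
          Finset.sum_const, smul_eq_mul, mul_comm]
      · rw [Finset.sum_congr rfl (fun P hP => if_neg (Finset.mem_filter.mp hP).2),
          Finset.sum_const, smul_eq_mul, mul_comm]
    rw [← hsum_s]
    omega
  -- pigeonhole: some 6-secant contains two points each lying on three 6-secants
  have hexists : ∃ L : PGLine, kf L = 6 ∧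
      1 < (sF.filter (fun P => PGmem P L ∧ sfun P = 3)).card := by
    by_contra hcon
    push_neg at hcon
    have hinc : 3 * n3 ≤ tt 6 := by
      have h1 : ∑ P ∈ sF.filter (fun P => sfun P = 3), sfun P = 3 * n3 := by
        rw [Finset.sum_congr rfl (fun P hP => (Finset.mem_filter.mp hP).2),
          Finset.sum_const, smul_eq_mul, hn3def, mul_comm]
      have swap : ∑ P ∈ sF.filter (fun P => sfun P = 3), sfun P
          = ∑ L : PGLine, ∑ P ∈ sF.filter (fun P => sfun P = 3),
              (if PGmem P L ∧ kf L = 6 then (1:ℕ) else 0) := by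
        simp only [hsfun, Finset.card_filter]
        rw [Finset.sum_comm]
      have inner : ∀ L : PGLine,
          (∑ P ∈ sF.filter (fun P => sfun P = 3), (if PGmem P L ∧ kf L = 6 then (1:ℕ) else 0))
            = if kf L = 6 then (sF.filter (fun P => PGmem P L ∧ sfun P = 3)).card else 0 := by
        intro L
        by_cases h6 : kf L = 6
        · simp only [h6, and_true, if_true]
          rw [← Finset.sum_filter, Finset.filter_filter]
          rw [Finset.sum_const, smul_eq_mul, mul_one]
          congr 1
          apply Finset.filter_congr
          intro P _
          constructor
          · rintro ⟨h1, h2⟩; exact ⟨h2, h1⟩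
          · rintro ⟨h1, h2⟩; exact ⟨h2, h1⟩
        · simp [h6]
      have hbound : ∑ P ∈ sF.filter (fun P => sfun P = 3), sfun P
          ≤ ∑ L : PGLine, (if kf L = 6 then (1:ℕ) else 0) := by
        rw [swap, Finset.sum_congr rfl (fun L _ => inner L)]
        apply Finset.sum_le_sum
        intro L _
        by_cases h6 : kf L = 6
        · simp only [h6, if_true]; exact hcon L h6
        · simp [h6]
      have htt6 : ∑ L : PGLine, (if kf L = 6 then (1:ℕ) else 0) = tt 6 := by
        rw [← Finset.sum_filter, Finset.sum_const, smul_eq_mul, mul_one]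
      omega
    omega
  obtain ⟨L, h6, hcard2⟩ := hexists
  obtain ⟨Q, hQ, R, hR, hQR⟩ := Finset.one_lt_card.mp hcard2
  have hQS := (Finset.mem_filter.mp hQ).1
  have hQL := (Finset.mem_filter.mp hQ).2.1
  have hQ3 := (Finset.mem_filter.mp hQ).2.2
  have hRS := (Finset.mem_filter.mp hR).1
  have hRL := (Finset.mem_filter.mp hR).2.1
  have hR3 := (Finset.mem_filter.mp hR).2.2
  have hset : ∀ P : PGPoint, {L' : PGLine | PGmem P L' ∧ IsSecant S 6 L'}
      = ↑(Finset.univ.filter (fun L' => PGmem P L' ∧ kf L' = 6)) := by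
    intro P
    ext L'
    simp only [Set.mem_setOf_eq, Finset.coe_filter, Finset.mem_univ, true_and,
      Set.mem_setOf_eq, hIsSec]
  refine ⟨Q, (hmemS _).mp hQS, R, (hmemS _).mp hRS, hQR, ?_, ?_, L, hQL, hRL, (hIsSec 6 L).mpr h6⟩
  · rw [hset Q, Set.ncard_coe_finset]; exact hQ3
  · rw [hset R, Set.ncard_coe_finset]; exact hR3
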